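/- The Riesz spectral projection is idempotent: let X be a complex Banach space, T a bounded linear operator on X, and Λ = {z ∈ ℂ : |z − c| = r} a circle contained in the resolvent set of T. Then the Riesz projection E = (2πi)⁻¹ ∮_Λ (z·I − T)⁻¹ dz satisfies E ∘ E = E. -/

import Mathlib

/-!
Write `ρ` for the resolvent and `I s` for `∮_{|z - c| = s} ρ z dz`. As `ρ` is holomorphic on
the open resolvent set, `I s = I r` for all `s` near `r`, so `I r * I r = I r₁ * I r₂` with
`r₁ < r < r₂`. For `w` on the inner circle, the resolvent identity
`ρ w * ρ z = (z - w)⁻¹ • (ρ w - ρ z)` and Cauchy's formula give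
`ρ w * I r₂ = 2πi • ρ w - ∮ (z - w)⁻¹ • ρ z dz`. Integrating over `w` and exchanging the two
integrals, the last term vanishes because `w ↦ (z - w)⁻¹` is holomorphic on the inner disc.
Hence `I r * I r = 2πi • I r`.
-/

open ContinuousLinearMap

open Metric Set Complex MeasureTheory
open scoped Real

theorem resolvent_sub_resolvent_eq_smul_mul {R A : Type*} [CommRing R] [Ring A] [Algebra R A]
    {a : A} {z w : R} (hz : z ∈ resolventSet R a) (hw : w ∈ resolventSet R a) :
    resolvent a w - resolvent a z = (z - w) • (resolvent a w * resolvent a z) := by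
  have hzw : (algebraMap R A z - a) - (algebraMap R A w - a) = (z - w) • (1 : A) := by
    rw [sub_sub_sub_cancel_right, ← map_sub, Algebra.algebraMap_eq_smul_one]
  calc resolvent a w - resolvent a z
      = resolvent a w * ((algebraMap R A z - a) - (algebraMap R A w - a)) * resolvent a z := by
        have hz' : (algebraMap R A z - a) * resolvent a z = 1 := Ring.mul_inverse_cancel _ hz
        have hw' : resolvent a w * (algebraMap R A w - a) = 1 := Ring.inverse_mul_cancel _ hw
        rw [mul_sub, sub_mul, mul_assoc, hz', hw', mul_one, one_mul]
    _ = (z - w) • (resolvent a w * resolvent a z) := by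
        rw [hzw, mul_smul_comm, mul_one, smul_mul_assoc]

theorem resolvent_eq_of_mul_eq_one {R A : Type*} [CommSemiring R] [Ring A] [Algebra R A]
    {a b : A} {z : R} (h₁ : (algebraMap R A z - a) * b = 1)
    (h₂ : b * (algebraMap R A z - a) = 1) : resolvent a z = b :=
  Ring.inverse_unit ⟨_, b, h₁, h₂⟩

theorem exists_annulus_subset_of_sphere_subset {E : Type*} [NormedAddCommGroup E]
    [NormedSpace ℝ E] [ProperSpace E] {U : Set E} {c : E} {r : ℝ} (hr : 0 < r)
    (hU : IsOpen U) (hsU : sphere c r ⊆ U) :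
    ∃ ε, 0 < ε ∧ ε < r ∧ closedBall c (r + ε) \ ball c (r - ε) ⊆ U := by
  obtain ⟨δ, hδ, hδU⟩ := (isCompact_sphere c r).exists_thickening_subset_open hU hsU
  refine ⟨min (δ / 2) (r / 2), by positivity, by linarith [min_le_right (δ / 2) (r / 2)], ?_⟩
  rintro z ⟨hz₁, hz₂⟩
  rw [mem_closedBall] at hz₁
  rw [mem_ball, not_lt] at hz₂
  have hd : 0 < dist z c := by linarith [min_le_right (δ / 2) (r / 2)]
  set p := AffineMap.lineMap c z (r / dist z c)
  have hp : p ∈ sphere c r := by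
    rw [mem_sphere, dist_lineMap_left, Real.norm_eq_abs, abs_of_pos (by positivity),
      dist_comm c z, div_mul_cancel₀ _ hd.ne']
  have hzp : dist z p = |dist z c - r| := by
    rw [dist_comm, dist_lineMap_right, Real.norm_eq_abs, dist_comm c z, ← abs_of_pos hd,
      ← abs_mul, abs_of_pos hd, sub_mul, one_mul, div_mul_cancel₀ _ hd.ne', abs_sub_comm]
  refine hδU (mem_thickening_iff.mpr ⟨p, hp, ?_⟩)
  rw [hzp, abs_sub_lt_iff]
  constructor <;> linarith [min_le_left (δ / 2) (r / 2)]

section CircleIntegral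

variable {E : Type*} [NormedAddCommGroup E] [NormedSpace ℂ E]

theorem ContinuousLinearMap.circleIntegral_comp_comm {F : Type*} [NormedAddCommGroup F]
    [NormedSpace ℂ F] [CompleteSpace E] [CompleteSpace F] (L : E →L[ℂ] F) {f : ℂ → E} {c : ℂ}
    {R : ℝ} (hf : CircleIntegrable f c R) :
    ∮ z in C(c, R), L (f z) = L (∮ z in C(c, R), f z) := by
  simp only [circleIntegral, ← L.intervalIntegral_comp_comm hf.out, L.map_smul]

theorem circleIntegral_eq_of_differentiableOn_annulus {f : ℂ → E} {c : ℂ} {r R : ℝ}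
    (h0 : 0 < r) (hle : r ≤ R) (hf : DifferentiableOn ℂ f (closedBall c R \ ball c r)) :
    ∮ z in C(c, R), f z = ∮ z in C(c, r), f z :=
  circleIntegral_eq_of_differentiable_on_annulus_off_countable h0 hle countable_empty
    hf.continuousOn fun _ hz => hf.differentiableAt <| Filter.mem_of_superset
      ((isOpen_ball.sdiff isClosed_closedBall).mem_nhds hz.1)
      (sdiff_subset_sdiff ball_subset_closedBall ball_subset_closedBall)

theorem circleIntegral_comm [CompleteSpace E] {F : ℂ → ℂ → E} {c c' : ℂ} {r R : ℝ}
    (hF : ContinuousOn (Function.uncurry F) (sphere c |r| ×ˢ sphere c' |R|)) :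
    ∮ w in C(c, r), ∮ z in C(c', R), F w z = ∮ z in C(c', R), ∮ w in C(c, r), F w z := by
  have hcont : Continuous fun p : ℝ × ℝ =>
      deriv (circleMap c r) p.1 • deriv (circleMap c' R) p.2 •
        F (circleMap c r p.1) (circleMap c' R p.2) := by
    simp only [deriv_circleMap]
    refine (by fun_prop : Continuous fun p : ℝ × ℝ => circleMap 0 r p.1 * I).smul
      ((by fun_prop : Continuous fun p : ℝ × ℝ => circleMap 0 R p.2 * I).smul ?_)
    exact hF.comp_continuous (f := fun p : ℝ × ℝ => (circleMap c r p.1, circleMap c' R p.2))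
      (by fun_prop) fun p =>
      ⟨circleMap_mem_sphere' c r p.1, circleMap_mem_sphere' c' R p.2⟩
  simp only [circleIntegral, ← intervalIntegral.integral_smul]
  rw [intervalIntegral_intervalIntegral_swap]
  · simp only [smul_comm (deriv (circleMap c r) _)]
  · exact (hcont.continuousOn.integrableOn_compact (isCompact_uIcc.prod isCompact_uIcc)).mono_set
      (prod_mono uIoc_subset_uIcc uIoc_subset_uIcc)

theorem circleIntegral_circleIntegral_sub_inv_smul_of_lt [CompleteSpace E] {f : ℂ → E} {c : ℂ}
    {r R : ℝ} (hr : 0 ≤ r) (hrR : r < R) (hf : ContinuousOn f (sphere c R)) :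
    ∮ w in C(c, r), ∮ z in C(c, R), (z - w)⁻¹ • f z = 0 := by
  have hR : 0 ≤ R := hr.trans hrR.le
  have hne : ∀ z ∉ closedBall c r, ∀ w ∈ closedBall c r, z - w ≠ 0 := fun z hz w hw h =>
    hz (sub_eq_zero.mp h ▸ hw)
  have hout : ∀ z ∈ sphere c R, z ∉ closedBall c r := fun z hz => by
    rw [mem_closedBall, mem_sphere.mp hz, not_le]; exact hrR
  have hcont : ContinuousOn (Function.uncurry fun w z => (z - w)⁻¹ • f z)
      (sphere c |r| ×ˢ sphere c |R|) := by
    rw [abs_of_nonneg hr, abs_of_nonneg hR]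
    exact ((continuousOn_snd.sub continuousOn_fst).inv₀ fun p hp =>
      hne _ (hout _ hp.2) _ (sphere_subset_closedBall hp.1)).smul
      (hf.comp continuousOn_snd fun p hp => hp.2)
  have hinner : ∀ z ∈ sphere c R, ∮ w in C(c, r), (z - w)⁻¹ • f z = 0 := fun z hz => by
    have hd : DifferentiableOn ℂ (fun w => (z - w)⁻¹) (closedBall c r) :=
      (differentiableOn_const z |>.sub differentiableOn_id).inv (hne z (hout z hz))
    rw [circleIntegral.integral_smul_const,
      (hd.diffContOnCl_ball subset_rfl).circleIntegral_eq_zero hr, zero_smul]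
  rw [circleIntegral_comm hcont, circleIntegral.integral_congr hR hinner]
  simp [circleIntegral]

end CircleIntegral

section Resolvent

variable {A : Type*} [NormedRing A] [NormedAlgebra ℂ A] [CompleteSpace A] {a : A} {c : ℂ}

theorem differentiableOn_resolvent : DifferentiableOn ℂ (resolvent a) (resolventSet ℂ a) :=
  fun _ hz => (spectrum.hasDerivAt_resolvent_const_left hz).differentiableAt.differentiableWithinAt

theorem circleIntegral_resolvent_mul_of_lt {r₁ r₂ : ℝ} (hr₁ : 0 ≤ r₁) (hr₁₂ : r₁ < r₂)
    (hs₁ : sphere c r₁ ⊆ resolventSet ℂ a) (hs₂ : sphere c r₂ ⊆ resolventSet ℂ a) :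
    (∮ z in C(c, r₁), resolvent a z) * (∮ z in C(c, r₂), resolvent a z) =
      (2 * π * I) • ∮ z in C(c, r₁), resolvent a z := by
  set I₂ := ∮ z in C(c, r₂), resolvent a z
  have hr₂ : 0 ≤ r₂ := hr₁.trans hr₁₂.le
  have hc₁ : ContinuousOn (resolvent a) (sphere c r₁) :=
    differentiableOn_resolvent.continuousOn.mono hs₁
  have hc₂ : ContinuousOn (resolvent a) (sphere c r₂) :=
    differentiableOn_resolvent.continuousOn.mono hs₂
  have hmul : ∀ w ∈ sphere c r₁, (2 * π * I) • resolvent a w - resolvent a w * I₂ =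
      ∮ z in C(c, r₂), (z - w)⁻¹ • resolvent a z := by
    intro w hw
    have hw₂ : w ∈ ball c r₂ := by rwa [mem_ball, mem_sphere.mp hw]
    have hzw : ∀ z ∈ sphere c r₂, z - w ≠ 0 := fun z hz h => by
      rw [sub_eq_zero.mp h, mem_sphere, mem_sphere.mp hw] at hz
      exact hr₁₂.ne hz
    have hk : ContinuousOn (fun z => (z - w)⁻¹) (sphere c r₂) :=
      (continuousOn_id.sub continuousOn_const).inv₀ hzw
    suffices resolvent a w * I₂ =
        (2 * π * I) • resolvent a w - ∮ z in C(c, r₂), (z - w)⁻¹ • resolvent a z by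
      rw [this, sub_sub_cancel]
    calc resolvent a w * I₂ = ∮ z in C(c, r₂), resolvent a w * resolvent a z :=
          ((mul ℂ A (resolvent a w)).circleIntegral_comp_comm (hc₂.circleIntegrable hr₂)).symm
      _ = ∮ z in C(c, r₂), ((z - w)⁻¹ • resolvent a w - (z - w)⁻¹ • resolvent a z) :=
          circleIntegral.integral_congr hr₂ fun z hz => by
            rw [← smul_sub, resolvent_sub_resolvent_eq_smul_mul (hs₂ hz) (hs₁ hw),
              inv_smul_smul₀ (hzw z hz)]
      _ = (2 * π * I) • resolvent a w - ∮ z in C(c, r₂), (z - w)⁻¹ • resolvent a z := by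
          rw [circleIntegral.integral_sub
            ((hk.smul continuousOn_const).circleIntegrable (f := fun z => _ • resolvent a w) hr₂)
            ((hk.smul hc₂).circleIntegrable (f := fun z => _ • resolvent a z) hr₂),
            circleIntegral.integral_smul_const, circleIntegral.integral_sub_inv_of_mem_ball hw₂]
  have hzero : ∮ w in C(c, r₁), ((2 * π * I) • resolvent a w - resolvent a w * I₂) = 0 := by
    rw [circleIntegral.integral_congr hr₁ hmul]
    exact circleIntegral_circleIntegral_sub_inv_smul_of_lt hr₁ hr₁₂ hc₂
  have hmul_const :
      ∮ w in C(c, r₁), resolvent a w * I₂ = (∮ w in C(c, r₁), resolvent a w) * I₂ :=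
    ((mul ℂ A).flip I₂).circleIntegral_comp_comm (hc₁.circleIntegrable hr₁)
  rw [circleIntegral.integral_sub
    ((hc₁.const_smul _).circleIntegrable (f := fun w => (2 * π * I) • resolvent a w) hr₁)
    ((hc₁.mul continuousOn_const).circleIntegrable (f := fun w => resolvent a w * I₂) hr₁),
    circleIntegral.integral_smul, hmul_const, sub_eq_zero] at hzero
  exact hzero.symm

theorem circleIntegral_resolvent_mul_self {r : ℝ} (hr : 0 < r)
    (hs : sphere c r ⊆ resolventSet ℂ a) :
    (∮ z in C(c, r), resolvent a z) * (∮ z in C(c, r), resolvent a z) =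
      (2 * π * I) • ∮ z in C(c, r), resolvent a z := by
  obtain ⟨ε, hε, hεr, hann⟩ :=
    exists_annulus_subset_of_sphere_subset hr (spectrum.isOpen_resolventSet a) hs
  have hd : DifferentiableOn ℂ (resolvent a) (closedBall c (r + ε) \ ball c (r - ε)) :=
    differentiableOn_resolvent.mono hann
  have hsphere : ∀ s, |s - r| ≤ ε → sphere c s ⊆ resolventSet ℂ a := fun s hs z hz => by
    rw [abs_le] at hs
    refine hann ⟨?_, ?_⟩
    · rw [mem_closedBall, mem_sphere.mp hz]; linarith
    · rw [mem_ball, mem_sphere.mp hz]; linarith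
  have h₁ : ∮ z in C(c, r), resolvent a z = ∮ z in C(c, r - ε), resolvent a z :=
    circleIntegral_eq_of_differentiableOn_annulus (by linarith) (by linarith)
      (hd.mono (sdiff_subset_sdiff (closedBall_subset_closedBall (by linarith)) subset_rfl))
  have h₂ : ∮ z in C(c, r + ε), resolvent a z = ∮ z in C(c, r), resolvent a z :=
    circleIntegral_eq_of_differentiableOn_annulus hr (by linarith)
      (hd.mono (sdiff_subset_sdiff subset_rfl (ball_subset_ball (by linarith))))
  calc (∮ z in C(c, r), resolvent a z) * (∮ z in C(c, r), resolvent a z)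
      = (∮ z in C(c, r - ε), resolvent a z) * (∮ z in C(c, r + ε), resolvent a z) := by
        rw [h₂, ← h₁]
    _ = (2 * π * I) • ∮ z in C(c, r), resolvent a z := by
        rw [circleIntegral_resolvent_mul_of_lt (by linarith) (by linarith)
          (hsphere _ (by rw [sub_sub_cancel_left, abs_neg, abs_of_pos hε]))
          (hsphere _ (by rw [add_sub_cancel_left, abs_of_pos hε])), h₁]

noncomputable def rieszProjection (a : A) (c : ℂ) (r : ℝ) : A :=
  (2 * π * I : ℂ)⁻¹ • ∮ z in C(c, r), resolvent a z

theorem isIdempotentElem_rieszProjection {r : ℝ} (hr : 0 < r)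
    (hs : sphere c r ⊆ resolventSet ℂ a) : IsIdempotentElem (rieszProjection a c r) := by
  rw [IsIdempotentElem, rieszProjection, smul_mul_assoc, mul_smul_comm,
    circleIntegral_resolvent_mul_self hr hs, inv_smul_smul₀ two_pi_I_ne_zero]

end Resolvent

/-- The Riesz spectral projection associated with a circle contained in the
resolvent set of `T` is idempotent: `E ∘ E = E`. -/
theorem riesz_projection_idempotent
    {X : Type*} [NormedAddCommGroup X] [NormedSpace ℂ X] [CompleteSpace X]
    (T : X →L[ℂ] X) (c : ℂ) (r : ℝ) (hr : 0 < r)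
    (RT : ℂ → (X →L[ℂ] X))
    (hRT : ∀ z ∈ Metric.sphere c r,
      (z • ContinuousLinearMap.id ℂ X - T) ∘L RT z = ContinuousLinearMap.id ℂ X ∧
      RT z ∘L (z • ContinuousLinearMap.id ℂ X - T) = ContinuousLinearMap.id ℂ X)
    (E : X →L[ℂ] X)
    (hE : E = (2 * Real.pi * Complex.I : ℂ)⁻¹ • ∮ z in C(c, r), RT z) :
    E ∘L E = E := by
  have hinv : ∀ z ∈ sphere c r, (algebraMap ℂ (X →L[ℂ] X) z - T) * RT z = 1 ∧
      RT z * (algebraMap ℂ (X →L[ℂ] X) z - T) = 1 := by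
    simpa only [Algebra.algebraMap_eq_smul_one, one_def, mul_def] using hRT
  have hs : sphere c r ⊆ resolventSet ℂ T := fun z hz =>
    spectrum.mem_resolventSet_of_left_right_inverse (hinv z hz).1 (hinv z hz).2
  have hE' : E = rieszProjection T c r := by
    rw [hE, rieszProjection, circleIntegral.integral_congr hr.le fun z hz =>
      (resolvent_eq_of_mul_eq_one (hinv z hz).1 (hinv z hz).2).symm]
  rw [hE']
  exact (isIdempotentElem_rieszProjection hr hs).eq
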